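/- arXiv:1110.2572 — 3 statements merged into one kernel-verified Lean document; each statement's English description precedes it below -/
import Mathlib

section
/- Let A be a real division algebra of dimension n ∈ {2,4,8} with sign pair (α, β), and let σ, τ be invertible linear endomorphisms of A. Then the isotope A_{σ,τ} (with multiplication x ∘ y = σ(x)τ(y)) has left sign α · sign(det τ) and right sign β · sign(det σ). -/
lemma real_sign_mul (x y : ℝ) : Real.sign (x * y) = Real.sign x * Real.sign y := by
  rcases lt_trichotomy x 0 with hx | hx | hx <;>
  rcases lt_trichotomy y 0 with hy | hy | hy <;>
  simp [hx, hy, Real.sign_of_pos, Real.sign_of_neg, Real.sign_zero,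
    mul_pos, mul_pos_of_neg_of_neg, mul_neg_of_pos_of_neg, mul_neg_of_neg_of_pos]

/-- If A is a real division algebra of dimension n ∈ {2,4,8} with sign pair (α,β) and
σ, τ are invertible linear endomorphisms, then the isotope A_{σ,τ} has left sign
α·sign(det τ) and right sign β·sign(det σ). -/
theorem isotope_sign (A : Type*) [AddCommGroup A] [Module ℝ A] [FiniteDimensional ℝ A]
    (n : ℕ) (hn : n = 2 ∨ n = 4 ∨ n = 8) (hdim : Module.finrank ℝ A = n)
    (mul : A →ₗ[ℝ] A →ₗ[ℝ] A)
    (hL : ∀ a : A, a ≠ 0 → Function.Bijective ⇑(mul a))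
    (hR : ∀ a : A, a ≠ 0 → Function.Bijective fun x => mul x a)
    (σ τ : A ≃ₗ[ℝ] A) (α β : ℝ)
    (hα : ∀ a : A, a ≠ 0 → Real.sign (LinearMap.det (mul a)) = α)
    (hβ : ∀ a : A, a ≠ 0 → Real.sign (LinearMap.det (mul.flip a)) = β) :
    ∀ a : A, a ≠ 0 →
      Real.sign (LinearMap.det ((mul (σ a)) ∘ₗ (τ : A →ₗ[ℝ] A))) =
        α * Real.sign (LinearMap.det (τ : A →ₗ[ℝ] A)) ∧
      Real.sign (LinearMap.det ((mul.flip (τ a)) ∘ₗ (σ : A →ₗ[ℝ] A))) =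
        β * Real.sign (LinearMap.det (σ : A →ₗ[ℝ] A)) := by
  intro a ha
  have hσa : σ a ≠ 0 := fun h => ha (by simpa using σ.injective (by simpa using h))
  have hτa : τ a ≠ 0 := fun h => ha (by simpa using τ.injective (by simpa using h))
  constructor
  · rw [LinearMap.det_comp, real_sign_mul, hα _ hσa]
  · rw [LinearMap.det_comp, real_sign_mul, hβ _ hτa]
end

section
/- If A is an e-quadratic algebra over a field k of characteristic not 2 such that left multiplication by e is injective, then Im_e(A) = {v ∈ A \ ke : v² ∈ ke} ∪ {0} is a k-linear subspace of A and A = ke ⊕ Im_e(A). -/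
/-- If A is an e-quadratic algebra over a field k of characteristic ≠ 2 such that left
multiplication by e is injective, then Im_e(A) = {v ∉ ke : v² ∈ ke} ∪ {0} is a linear
subspace and A = ke ⊕ Im_e(A). -/
theorem e_quadratic_decomposition (k A : Type*) [Field k] (hchar : ringChar k ≠ 2)
    [AddCommGroup A] [Module k A] (mul : A →ₗ[k] A →ₗ[k] A)
    (e : A) (he : e ≠ 0) (hidem : mul e e = e)
    (hcentral : ∀ x : A, mul e x = mul x e)
    (hquad : ∀ x : A, mul x x ∈ Submodule.span k {e, mul e x})
    (hinj : Function.Injective ⇑(mul e)) :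
    ∃ W : Submodule k A,
      (W : Set A) =
        {v : A | v ∉ Submodule.span k ({e} : Set A) ∧
          mul v v ∈ Submodule.span k ({e} : Set A)} ∪ {0} ∧
      IsCompl (Submodule.span k ({e} : Set A)) W := by
  have two_ne : (2 : k) ≠ 0 := Ring.two_ne_zero hchar
  set S : Submodule k A := Submodule.span k ({e} : Set A) with hSdef
  have hmem : ∀ x : A, x ∈ S ↔ ∃ c : k, c • e = x := fun x => Submodule.mem_span_singleton
  -- if e • x ∈ ke then x ∈ ke
  have hL2 : ∀ x : A, mul e x ∈ S → x ∈ S := by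
    intro x hx
    obtain ⟨c, hc⟩ := (hmem _).mp hx
    refine (hmem _).mpr ⟨c, hinj ?_⟩
    rw [map_smul, hidem, hc]
  -- independence of e, mul e x for x ∉ S
  have hind : ∀ x : A, x ∉ S → ∀ a b : k, a • e + b • mul e x = 0 → a = 0 ∧ b = 0 := by
    intro x hx a b hab
    have hb : b = 0 := by
      by_contra hb
      apply hx
      apply hL2
      have h1 : b • mul e x = (-a) • e := by
        linear_combination (norm := module) hab
      have h2 : mul e x = (b⁻¹ * (-a)) • e := by
        rw [← smul_smul, ← h1, smul_smul, inv_mul_cancel₀ hb, one_smul]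
      exact (hmem _).mpr ⟨b⁻¹ * (-a), h2.symm⟩
    subst hb
    simp only [zero_smul, add_zero, smul_eq_zero] at hab
    exact ⟨hab.resolve_right he, rfl⟩
  -- closure of the set under addition
  have hadd : ∀ v w : A,
      ((v ∉ S ∧ mul v v ∈ S) ∨ v = 0) → ((w ∉ S ∧ mul w w ∈ S) ∨ w = 0) →
      ((v + w ∉ S ∧ mul (v + w) (v + w) ∈ S) ∨ v + w = 0) := by
    intro v w hv hw
    rcases hv with ⟨hvS, hv2⟩ | rfl
    swap
    · simpa using hw
    rcases hw with ⟨hwS, hw2⟩ | rfl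
    swap
    · simpa using Or.inl ⟨hvS, hv2⟩
    by_cases hvw0 : v + w = 0
    · exact Or.inr hvw0
    left
    by_cases hdep : ∃ a b : k, a • e + b • mul e v = mul e w
    · -- dependent case : w = a • e + b • v
      obtain ⟨a, b, hab⟩ := hdep
      have hw' : w = a • e + b • v := by
        apply hinj
        rw [← hab, map_add, map_smul, map_smul, hidem]
      have hb : b ≠ 0 := by
        intro hb
        apply hwS
        rw [hw', hb, zero_smul, add_zero]
        exact Submodule.smul_mem _ _ (Submodule.mem_span_singleton_self e)
      have hsq : mul w w = (a * a) • e + (2 * (a * b)) • mul e v + (b * b) • mul v v := by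
        rw [hw']
        simp only [map_add, map_smul, LinearMap.add_apply, LinearMap.smul_apply, hidem]
        rw [← hcentral v]
        module
      have ha : a = 0 := by
        by_contra ha
        apply hvS
        apply hL2
        have hmemS : (2 * (a * b)) • mul e v ∈ S := by
          have h1 : mul w w - (a * a) • e - (b * b) • mul v v
              = (2 * (a * b)) • mul e v := by
            linear_combination (norm := module) hsq
          rw [← h1]
          exact Submodule.sub_mem _ (Submodule.sub_mem _ hw2
            (Submodule.smul_mem _ _ (Submodule.mem_span_singleton_self e)))
            (Submodule.smul_mem _ _ hv2)
        have h2ab : (2 * (a * b)) ≠ 0 := by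
          simp [two_ne, ha, hb]
        have := Submodule.smul_mem S (2 * (a * b))⁻¹ hmemS
        rwa [smul_smul, inv_mul_cancel₀ h2ab, one_smul] at this
      have hw'' : w = b • v := by rw [hw', ha, zero_smul, zero_add]
      have hvw : v + w = (1 + b) • v := by rw [hw'']; module
      have h1b : (1 + b) ≠ 0 := by
        intro h
        apply hvw0
        rw [hvw, h, zero_smul]
      constructor
      · intro h
        apply hvS
        rw [hvw] at h
        have := Submodule.smul_mem S (1 + b)⁻¹ h
        rwa [smul_smul, inv_mul_cancel₀ h1b, one_smul] at this
      · rw [hvw, LinearMap.map_smul₂, map_smul, smul_smul]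
        exact Submodule.smul_mem _ _ hv2
    · -- independent case
      push_neg at hdep
      have hI : ∀ a b c : k, a • e + b • mul e v + c • mul e w = 0 → a = 0 ∧ b = 0 ∧ c = 0 := by
        intro a b c habc
        by_cases hc : c = 0
        · subst hc
          rw [zero_smul, add_zero] at habc
          obtain ⟨h1, h2⟩ := hind v hvS a b habc
          exact ⟨h1, h2, rfl⟩
        · exfalso
          apply hdep (c⁻¹ * (-a)) (c⁻¹ * (-b))
          have h1 : c • mul e w = (-a) • e + (-b) • mul e v := by
            linear_combination (norm := module) habc
          have h2 : mul e w = c⁻¹ • ((-a) • e + (-b) • mul e v) := by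
            rw [← h1, smul_smul, inv_mul_cancel₀ hc, one_smul]
          rw [h2, smul_add, smul_smul, smul_smul]
      constructor
      · -- v + w ∉ S
        intro h
        obtain ⟨c, hc⟩ := (hmem _).mp h
        have hev : mul e (v + w) = c • e := by rw [← hc, map_smul, hidem]
        have h0 : (-c) • e + (1 : k) • mul e v + (1 : k) • mul e w = 0 := by
          rw [map_add] at hev
          linear_combination (norm := module) hev
        exact one_ne_zero (hI _ _ _ h0).2.1
      · -- square of v + w in S
        obtain ⟨n, hn⟩ := (hmem _).mp hv2
        obtain ⟨m, hm⟩ := (hmem _).mp hw2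
        obtain ⟨a, s, h1⟩ := Submodule.mem_span_pair.mp (hquad (v + w))
        obtain ⟨a', s', h2⟩ := Submodule.mem_span_pair.mp (hquad (v + (2 : k) • w))
        -- expand h1
        have e1 : a • e + s • mul e v + s • mul e w
            = n • e + m • e + (mul v w + mul w v) := by
          simp only [map_add, map_smul, LinearMap.add_apply, LinearMap.smul_apply] at h1
          rw [← hn, ← hm] at h1
          linear_combination (norm := module) h1
        have e2 : a' • e + s' • mul e v + (2 * s') • mul e w
            = n • e + (4 * m) • e + (2 : k) • (mul v w + mul w v) := by
          simp only [map_add, map_smul, LinearMap.add_apply, LinearMap.smul_apply] at h2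
          rw [← hn, ← hm] at h2
          linear_combination (norm := module) h2
        have hcomb : (2 * a - a' - n + 2 * m) • e + (2 * s - s') • mul e v
            + (2 * s - 2 * s') • mul e w = 0 := by
          linear_combination (norm := module) (2 : k) • e1 - e2
        obtain ⟨_, hb2, hc2⟩ := hI _ _ _ hcomb
        have hs : s = 0 := by
          have h2s : (2 : k) * s = 0 := by linear_combination 2 * hb2 - hc2
          rcases mul_eq_zero.mp h2s with h | h
          · exact absurd h two_ne
          · exact h
        refine (hmem _).mpr ⟨a, ?_⟩
        rw [← h1, hs, zero_smul, add_zero]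
    -- end independent case
  -- closure under scalars
  have hsmul : ∀ (c : k) (x : A),
      ((x ∉ S ∧ mul x x ∈ S) ∨ x = 0) → ((c • x ∉ S ∧ mul (c • x) (c • x) ∈ S) ∨ c • x = 0) := by
    intro c x hx
    rcases hx with ⟨hxS, hx2⟩ | rfl
    · by_cases hc : c = 0
      · right; rw [hc, zero_smul]
      · left
        constructor
        · intro h
          apply hxS
          have := Submodule.smul_mem S c⁻¹ h
          rwa [smul_smul, inv_mul_cancel₀ hc, one_smul] at this
        · rw [LinearMap.map_smul₂, map_smul, smul_smul]
          exact Submodule.smul_mem _ _ hx2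
    · right; rw [smul_zero]
  -- build the submodule
  refine ⟨{ carrier := {v : A | v ∉ S ∧ mul v v ∈ S} ∪ {0}
            add_mem' := ?_
            zero_mem' := Or.inr rfl
            smul_mem' := ?_ }, ?_, ?_⟩
  · intro a b ha hb
    have ha' : (a ∉ S ∧ mul a a ∈ S) ∨ a = 0 := by
      rcases ha with h | h
      · exact Or.inl h
      · exact Or.inr h
    have hb' : (b ∉ S ∧ mul b b ∈ S) ∨ b = 0 := by
      rcases hb with h | h
      · exact Or.inl h
      · exact Or.inr h
    rcases hadd a b ha' hb' with h | h
    · exact Or.inl h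
    · exact Or.inr h
  · intro c x hx
    have hx' : (x ∉ S ∧ mul x x ∈ S) ∨ x = 0 := by
      rcases hx with h | h
      · exact Or.inl h
      · exact Or.inr h
    rcases hsmul c x hx' with h | h
    · exact Or.inl h
    · exact Or.inr h
  · rfl
  · rw [isCompl_iff]
    constructor
    · rw [Submodule.disjoint_def]
      intro x hxS hxW
      rcases hxW with ⟨h, _⟩ | h
      · exact absurd hxS h
      · exact h
    · rw [codisjoint_iff, eq_top_iff]
      intro x _
      rw [Submodule.mem_sup]
      by_cases hx : x ∈ S
      · exact ⟨x, hx, 0, Or.inr rfl, add_zero x⟩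
      · obtain ⟨n, t, hnt⟩ := Submodule.mem_span_pair.mp (hquad x)
        set c : k := t / 2 with hcdef
        refine ⟨c • e, Submodule.smul_mem _ _ (Submodule.mem_span_singleton_self e),
          x - c • e, Or.inl ⟨?_, ?_⟩, by abel⟩
        · intro h
          apply hx
          have : x = (x - c • e) + c • e := by abel
          rw [this]
          exact Submodule.add_mem _ h (Submodule.smul_mem _ _ (Submodule.mem_span_singleton_self e))
        · have hexp : mul (x - c • e) (x - c • e)
              = mul x x - (2 * c) • mul e x + (c * c) • e := by
            simp only [map_sub, map_smul, LinearMap.sub_apply, LinearMap.smul_apply, hidem]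
            rw [← hcentral x]
            module
          have h2c : 2 * c = t := by
            rw [hcdef]
            field_simp
          rw [hexp, h2c, ← hnt]
          refine (hmem _).mpr ⟨n + c * c, ?_⟩
          module
end

section
/- If A is an e-quadratic real division algebra of dimension greater than 2, then the central idempotent e witnessing the e-quadratic property is unique; consequently the decomposition A = ℝe ⊕ Im_e(A) is uniquely determined by A. -/
open Submodule Module

lemma e_quad_trace {A : Type*} [AddCommGroup A] [Module ℝ A]
    (mul : A →ₗ[ℝ] A →ₗ[ℝ] A) (e : A) (he : e ≠ 0)
    (hLe : Function.Bijective ⇑(mul e))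
    (hidem : mul e e = e) (hcentral : ∀ x : A, mul e x = mul x e)
    (hquad : ∀ x : A, mul x x ∈ Submodule.span ℝ {e, mul e x}) :
    ∃ φ : A →ₗ[ℝ] ℝ, ∀ x : A, φ x = 0 → mul x x ∈ Submodule.span ℝ {e} := by
  classical
  set L : A ≃ₗ[ℝ] A := LinearEquiv.ofBijective (mul e) hLe with hLdef
  have hLapp : ∀ x, L x = mul e x := fun x => rfl
  have hLsymm : ∀ x, L.symm (mul e x) = x := by
    intro x; rw [← hLapp]; exact L.symm_apply_apply x
  have hLsymm_e : L.symm e = e := by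
    conv_lhs => rw [← hidem]
    exact hLsymm e
  set M : A → A := fun x => L.symm (mul x x) with hMdef
  -- existence of a trace candidate
  have hM : ∀ x : A, ∃ t : ℝ, M x - t • x ∈ Submodule.span ℝ {e} := by
    intro x
    obtain ⟨a, b, hab⟩ := Submodule.mem_span_pair.mp (hquad x)
    refine ⟨b, Submodule.mem_span_singleton.mpr ⟨a, ?_⟩⟩
    have : M x = a • e + b • x := by
      rw [hMdef]; dsimp only
      rw [← hab, map_add, map_smul, map_smul, hLsymm_e, hLsymm]
    rw [this]; abel
  -- uniqueness of the trace off the line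
  have huniq : ∀ x : A, x ∉ Submodule.span ℝ {e} → ∀ t s : ℝ,
      M x - t • x ∈ Submodule.span ℝ {e} → M x - s • x ∈ Submodule.span ℝ {e} → t = s := by
    intro x hx t s ht hs
    by_contra hts
    have hmem : (s - t) • x ∈ Submodule.span ℝ {e} := by
      have h1 := Submodule.sub_mem _ ht hs
      have h2 : M x - t • x - (M x - s • x) = (s - t) • x := by
        rw [sub_smul]; abel
      rwa [h2] at h1
    have hst : s - t ≠ 0 := sub_ne_zero.mpr fun h => hts h.symm
    have : x ∈ Submodule.span ℝ {e} := by
      have h3 := Submodule.smul_mem (Submodule.span ℝ {e}) (s - t)⁻¹ hmem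
      rwa [smul_smul, inv_mul_cancel₀ hst, one_smul] at h3
    exact hx this
  -- the trace function
  set tf : A → ℝ := fun x =>
    if h : x ∈ Submodule.span ℝ {e} then 2 * (Submodule.mem_span_singleton.mp h).choose
    else (hM x).choose with htfdef
  have hcoef : ∀ c : ℝ, tf (c • e) = 2 * c := by
    intro c
    have h : (c • e : A) ∈ Submodule.span ℝ {e} :=
      Submodule.smul_mem _ c (Submodule.mem_span_singleton_self e)
    rw [htfdef]; dsimp only
    rw [dif_pos h]
    have hspec := (Submodule.mem_span_singleton.mp h).choose_spec
    have hch : (Submodule.mem_span_singleton.mp h).choose = c := by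
      have h0 := sub_eq_zero.mpr hspec
      rw [← sub_smul] at h0
      rcases smul_eq_zero.mp h0 with h0 | h0
      · linarith [sub_eq_zero.mp h0]
      · exact absurd h0 he
    rw [hch]
  have hQtf : ∀ x : A, M x - tf x • x ∈ Submodule.span ℝ {e} := by
    intro x
    by_cases h : x ∈ Submodule.span ℝ {e}
    · obtain ⟨c, hc⟩ := Submodule.mem_span_singleton.mp h
      subst hc
      have hsq : mul (c • e) (c • e) = (c * c) • e := by
        simp only [map_smul, LinearMap.smul_apply, hidem, smul_smul]
      have hMx : M (c • e) = (c * c) • e := by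
        rw [hMdef]; dsimp only; rw [hsq, map_smul, hLsymm_e]
      rw [hMx, hcoef]
      refine Submodule.mem_span_singleton.mpr ⟨c * c - 2 * c * c, ?_⟩
      module
    · rw [htfdef]; dsimp only; rw [dif_neg h]
      exact (hM x).choose_spec
  have htf_of : ∀ x : A, x ∉ Submodule.span ℝ {e} → ∀ t : ℝ,
      M x - t • x ∈ Submodule.span ℝ {e} → tf x = t := by
    intro x hx t ht
    exact huniq x hx (tf x) t (hQtf x) ht
  -- square on the plane spanned by e and x
  have hMplane : ∀ x : A, ∀ α β : ℝ,
      M (α • e + β • x) = (α * α) • e + (2 * α * β) • x + (β * β) • M x := by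
    intro x α β
    have hsq : mul (α • e + β • x) (α • e + β • x)
        = (α * α) • e + (2 * α * β) • (mul e x) + (β * β) • (mul x x) := by
      simp only [map_add, map_smul, LinearMap.add_apply, LinearMap.smul_apply, hidem]
      rw [← hcentral x]
      module
    rw [hMdef]; dsimp only
    rw [hsq, map_add, map_add, map_smul, map_smul, map_smul, hLsymm_e, hLsymm]
  have hplane : ∀ x : A, x ∉ Submodule.span ℝ {e} → ∀ α β : ℝ,
      tf (α • e + β • x) = 2 * α + β * tf x := by
    intro x hx α β
    obtain ⟨r, hr⟩ := Submodule.mem_span_singleton.mp (hQtf x)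
    have hMx : M x = tf x • x + r • e := by rw [hr]; abel
    have hQy : M (α • e + β • x) - (2 * α + β * tf x) • (α • e + β • x)
        ∈ Submodule.span ℝ {e} := by
      rw [hMplane x α β, hMx]
      refine Submodule.mem_span_singleton.mpr ⟨β * β * r - α * α - α * β * tf x, ?_⟩
      module
    by_cases hy : (α • e + β • x) ∈ Submodule.span ℝ {e}
    · have hβ : β = 0 := by
        by_contra hβ
        have h1 : β • x ∈ Submodule.span ℝ {e} := by
          have h1' : β • x = (α • e + β • x) - α • e := by abel
          rw [h1']
          exact Submodule.sub_mem _ hy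
            (Submodule.smul_mem _ α (Submodule.mem_span_singleton_self e))
        have h2 := Submodule.smul_mem (Submodule.span ℝ {e}) β⁻¹ h1
        rw [smul_smul, inv_mul_cancel₀ hβ, one_smul] at h2
        exact hx h2
      rw [hβ, zero_smul, add_zero, hcoef]
      ring
    · exact htf_of _ hy _ hQy
  -- independence helper
  have hindep : ∀ x : A, x ∉ Submodule.span ℝ {e} → ∀ y : A, y ∉ Submodule.span ℝ {e, x} →
      ∀ a b : ℝ, a • x + b • y ∈ Submodule.span ℝ {e} → a = 0 ∧ b = 0 := by
    intro x hx y hy a b hab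
    have hline_le : Submodule.span ℝ {e} ≤ Submodule.span ℝ {e, x} := by
      apply Submodule.span_mono; intro z hz; rw [Set.mem_singleton_iff] at hz
      rw [hz]; exact Set.mem_insert e {x}
    have hb : b = 0 := by
      by_contra hb
      have hxmem : x ∈ Submodule.span ℝ {e, x} :=
        Submodule.subset_span (Set.mem_insert_of_mem _ rfl)
      have hy' : y = b⁻¹ • ((a • x + b • y) - a • x) := by
        rw [add_sub_cancel_left, smul_smul, inv_mul_cancel₀ hb, one_smul]
      have : y ∈ Submodule.span ℝ {e, x} := by
        rw [hy']
        exact Submodule.smul_mem _ _ (Submodule.sub_mem _ (hline_le hab)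
          (Submodule.smul_mem _ a hxmem))
      exact hy this
    refine ⟨?_, hb⟩
    rw [hb, zero_smul, add_zero] at hab
    by_contra ha
    have h2 := Submodule.smul_mem (Submodule.span ℝ {e}) a⁻¹ hab
    rw [smul_smul, inv_mul_cancel₀ ha, one_smul] at h2
    exact hx h2
  -- additivity
  have hadd : ∀ x y : A, tf (x + y) = tf x + tf y := by
    intro x y
    by_cases hx : x ∈ Submodule.span ℝ {e}
    · obtain ⟨c, hc⟩ := Submodule.mem_span_singleton.mp hx
      by_cases hy : y ∈ Submodule.span ℝ {e}
      · obtain ⟨d, hd⟩ := Submodule.mem_span_singleton.mp hy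
        rw [← hc, ← hd, ← add_smul, hcoef, hcoef, hcoef]; ring
      · have h1 : x + y = c • e + (1 : ℝ) • y := by rw [hc, one_smul]
        rw [h1, hplane y hy c 1, ← hc, hcoef]; ring
    · by_cases hy : y ∈ Submodule.span ℝ {e}
      · obtain ⟨d, hd⟩ := Submodule.mem_span_singleton.mp hy
        have h1 : x + y = d • e + (1 : ℝ) • x := by rw [hd, one_smul]; abel
        rw [h1, hplane x hx d 1, ← hd, hcoef]; ring
      · by_cases hxy : y ∈ Submodule.span ℝ {e, x}
        · obtain ⟨α, β, hab⟩ := Submodule.mem_span_pair.mp hxy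
          have h1 : x + y = α • e + (1 + β) • x := by rw [← hab]; module
          have h2 : tf y = 2 * α + β * tf x := by rw [← hab, hplane x hx]
          rw [h1, hplane x hx, h2]; ring
        · -- generic case: e, x, y independent
          have hQx := hQtf x
          have hQy := hQtf y
          have hQxy := hQtf (x + y)
          have hQxy' := hQtf (x - y)
          have hpar : M (x + y) + M (x - y) = (2:ℝ) • M x + (2:ℝ) • M y := by
            have hsq : mul (x+y) (x+y) + mul (x-y) (x-y)
                = (2:ℝ) • mul x x + (2:ℝ) • mul y y := by
              have e1 : mul (x+y) (x+y) = mul x x + mul x y + mul y x + mul y y := by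
                simp only [map_add, LinearMap.add_apply]; abel
              have e2 : mul (x-y) (x-y) = mul x x - mul x y - mul y x + mul y y := by
                simp only [map_sub, LinearMap.sub_apply]; abel
              rw [e1, e2]; module
            rw [hMdef]; dsimp only
            rw [← map_add, hsq, map_add, map_smul, map_smul]
          have hcomb : (tf (x+y) + tf (x-y) - 2 * tf x) • x
              + (tf (x+y) - tf (x-y) - 2 * tf y) • y ∈ Submodule.span ℝ {e} := by
            have h1 := Submodule.add_mem _ hQxy hQxy'
            have h2 := Submodule.add_mem _ (Submodule.smul_mem _ (2:ℝ) hQx)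
              (Submodule.smul_mem _ (2:ℝ) hQy)
            have h3 := Submodule.sub_mem _ h2 h1
            have heq : (2:ℝ) • (M x - tf x • x) + (2:ℝ) • (M y - tf y • y)
                - (M (x + y) - tf (x+y) • (x + y) + (M (x - y) - tf (x-y) • (x - y)))
                = (tf (x+y) + tf (x-y) - 2 * tf x) • x
                  + (tf (x+y) - tf (x-y) - 2 * tf y) • y
                  - ((M (x+y) + M (x-y)) - ((2:ℝ) • M x + (2:ℝ) • M y)) := by
              module
            rw [heq, hpar, sub_self, sub_zero] at h3
            exact h3
          obtain ⟨ha, hb⟩ := hindep x hx y hxy _ _ hcomb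
          linarith
  have hsmul : ∀ (c : ℝ) (x : A), tf (c • x) = c * tf x := by
    intro c x
    by_cases hx : x ∈ Submodule.span ℝ {e}
    · obtain ⟨d, hd⟩ := Submodule.mem_span_singleton.mp hx
      rw [← hd, smul_smul, hcoef, hcoef]; ring
    · by_cases hc : c = 0
      · rw [hc, zero_smul, zero_mul]
        have h0 : (0 : A) = (0:ℝ) • e := by rw [zero_smul]
        rw [h0, hcoef]; ring
      · have hcx : c • x ∉ Submodule.span ℝ {e} := by
          intro hmem
          have h2 := Submodule.smul_mem (Submodule.span ℝ {e}) c⁻¹ hmem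
          rw [smul_smul, inv_mul_cancel₀ hc, one_smul] at h2
          exact hx h2
        refine htf_of _ hcx _ ?_
        obtain ⟨r, hr⟩ := Submodule.mem_span_singleton.mp (hQtf x)
        have hMcx : M (c • x) = (c * c) • M x := by
          rw [hMdef]; dsimp only
          simp only [map_smul, LinearMap.smul_apply, smul_smul]
        rw [hMcx]
        refine Submodule.mem_span_singleton.mpr ⟨c * c * r, ?_⟩
        have hMx : M x = tf x • x + r • e := by rw [hr]; abel
        rw [hMx]; module
  refine ⟨{ toFun := tf, map_add' := hadd, map_smul' := by intro c x; simp [hsmul] }, ?_⟩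
  intro x hx0
  have hQ := hQtf x
  simp only [LinearMap.coe_mk, AddHom.coe_mk] at hx0
  rw [hx0, zero_smul, sub_zero] at hQ
  obtain ⟨c, hc⟩ := Submodule.mem_span_singleton.mp hQ
  refine Submodule.mem_span_singleton.mpr ⟨c, ?_⟩
  have hML : mul x x = L (M x) := by
    rw [hMdef]; dsimp only; rw [L.apply_symm_apply]
  rw [hML, ← hc, map_smul, hLapp, hidem]

/-- In an e-quadratic real division algebra of dimension greater than 2, the central
idempotent e witnessing the e-quadratic property is unique. -/
theorem e_quadratic_unique_idempotent (A : Type*) [AddCommGroup A] [Module ℝ A]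
    [FiniteDimensional ℝ A] (mul : A →ₗ[ℝ] A →ₗ[ℝ] A)
    (hL : ∀ a : A, a ≠ 0 → Function.Bijective ⇑(mul a))
    (hR : ∀ a : A, a ≠ 0 → Function.Bijective fun x => mul x a)
    (hdim : 2 < Module.finrank ℝ A)
    (e f : A) (he : e ≠ 0) (hf : f ≠ 0)
    (hidem_e : mul e e = e) (hcentral_e : ∀ x : A, mul e x = mul x e)
    (hquad_e : ∀ x : A, mul x x ∈ Submodule.span ℝ {e, mul e x})
    (hidem_f : mul f f = f) (hcentral_f : ∀ x : A, mul f x = mul x f)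
    (hquad_f : ∀ x : A, mul x x ∈ Submodule.span ℝ {f, mul f x}) :
    e = f := by
  classical
  obtain ⟨φe, hφe⟩ := e_quad_trace mul e he (hL e he) hidem_e hcentral_e hquad_e
  obtain ⟨φf, hφf⟩ := e_quad_trace mul f hf (hL f hf) hidem_f hcentral_f hquad_f
  -- the intersection of the two kernels is nontrivial
  set n := Module.finrank ℝ A with hn
  have hker : ∀ ψ : A →ₗ[ℝ] ℝ, n ≤ Module.finrank ℝ (LinearMap.ker ψ) + 1 := by
    intro ψ
    have h1 := LinearMap.finrank_range_add_finrank_ker ψ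
    have h2 : Module.finrank ℝ (LinearMap.range ψ) ≤ 1 := by
      have := Submodule.finrank_le (LinearMap.range ψ)
      simpa using this
    omega
  have hsupinf := Submodule.finrank_sup_add_finrank_inf_eq
    (LinearMap.ker φe) (LinearMap.ker φf)
  have hsup : Module.finrank ℝ ↥(LinearMap.ker φe ⊔ LinearMap.ker φf) ≤ n :=
    Submodule.finrank_le _
  have hinf : 0 < Module.finrank ℝ ↥(LinearMap.ker φe ⊓ LinearMap.ker φf) := by
    have h1 := hker φe
    have h2 := hker φf
    omega
  have hnontriv : Nontrivial ↥(LinearMap.ker φe ⊓ LinearMap.ker φf) :=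
    Module.finrank_pos_iff (R := ℝ) |>.mp hinf
  obtain ⟨v, hv⟩ := exists_ne (0 : ↥(LinearMap.ker φe ⊓ LinearMap.ker φf))
  · have hvmem := v.2
    have hv0 : (v : A) ≠ 0 := fun h => hv (Subtype.ext h)
    have hve : mul (v : A) (v : A) ∈ Submodule.span ℝ {e} :=
      hφe _ (LinearMap.mem_ker.mp hvmem.1)
    have hvf : mul (v : A) (v : A) ∈ Submodule.span ℝ {f} :=
      hφf _ (LinearMap.mem_ker.mp hvmem.2)
    obtain ⟨c, hc⟩ := Submodule.mem_span_singleton.mp hve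
    obtain ⟨d, hd⟩ := Submodule.mem_span_singleton.mp hvf
    have hsqne : mul (v : A) (v : A) ≠ 0 := by
      intro h0
      have : (v : A) = 0 := by
        apply (hL (v : A) hv0).1
        rw [h0, map_zero]
      exact hv0 this
    have hcne : c ≠ 0 := by
      intro h0; rw [h0, zero_smul] at hc; exact hsqne hc.symm
    have hef : e = (c⁻¹ * d) • f := by
      have : c • e = d • f := by rw [hc, hd]
      calc e = c⁻¹ • (c • e) := by rw [smul_smul, inv_mul_cancel₀ hcne, one_smul]
        _ = c⁻¹ • (d • f) := by rw [this]
        _ = (c⁻¹ * d) • f := by rw [smul_smul]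
    set k := c⁻¹ * d with hk
    have hkne : k ≠ 0 := by
      intro h0; rw [hef, h0, zero_smul] at he; exact he rfl
    have hkk : (k * k) • f = k • f := by
      have h1 : mul e e = (k * k) • f := by
        rw [hef]; simp only [map_smul, LinearMap.smul_apply, hidem_f, smul_smul]
      rw [← h1, hidem_e, hef]
    have hk1 : k = 1 := by
      have h2 : (k * k - k) • f = 0 := by rw [sub_smul, hkk, sub_self]
      rcases smul_eq_zero.mp h2 with h3 | h3
      · have : k * (k - 1) = 0 := by linear_combination h3
        rcases mul_eq_zero.mp this with h4 | h4
        · exact absurd h4 hkne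
        · linarith [sub_eq_zero.mp h4]
      · exact absurd h3 hf
    rw [hef, hk1, one_smul]
end
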